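/- arXiv:0711.4185 — 4 statements merged into one kernel-verified Lean document; each statement's English description precedes it below -/
import Mathlib

section
/- For a word w = w_1 w_2 ⋯ w_s that is weakly increasing, the successive row insertion of w into a semistandard tableau Y adds a horizontal strip to the shape of Y (no two added boxes lie in the same column). -/
/-- Schensted row insertion into a single row: returns the new row and the bumped entry. -/
def insertRow : List ℕ → ℕ → List ℕ × Option ℕ
  | [], x => ([x], none)
  | y :: ys, x =>
    if x < y then (x :: ys, some y)
    else
      let p := insertRow ys x
      (y :: p.1, p.2)

/-- Schensted row insertion of a letter into a tableau (list of rows). -/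
def rsInsert : List (List ℕ) → ℕ → List (List ℕ)
  | [], x => [[x]]
  | r :: rs, x =>
    match (insertRow r x).2 with
    | none => (insertRow r x).1 :: rs
    | some y => (insertRow r x).1 :: rsInsert rs y

/-- Successive insertion of a word. -/
def rsInsertWord (Y : List (List ℕ)) (w : List ℕ) : List (List ℕ) :=
  w.foldl rsInsert Y

/-- The row word of a tableau: rows read from bottom to top. -/
def rowWord (Y : List (List ℕ)) : List ℕ := Y.reverse.flatten

/-- Length of the `i`-th row (the shape of the tableau). -/
def shapeAt (Y : List (List ℕ)) (i : ℕ) : ℕ := (Y.getD i []).length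

/-- The highest element of `B^{r,s}`: row `i` filled with `i`. -/
def highestTab (r s : ℕ) : List (List ℕ) :=
  (List.range r).map fun i => List.replicate s (i + 1)

/-- Energy function: number of boxes of `(b' ← row(b))` outside the
concatenation of the shapes of `b` and `b'`. -/
def energyH (b b' : List (List ℕ)) : ℕ :=
  let Z := rsInsertWord b' (rowWord b)
  ∑ i ∈ Finset.range Z.length, (shapeAt Z i - (shapeAt b i + shapeAt b' i))

/-- Semistandard Young tableau: rows weakly increasing, nonempty,
shape weakly decreasing, and columns strictly increasing. -/
def IsSSYT (Y : List (List ℕ)) : Prop :=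
  (∀ r ∈ Y, List.Chain' (· ≤ ·) r) ∧
  (∀ r ∈ Y, r ≠ []) ∧
  List.Chain' (fun r s => s.length ≤ r.length ∧
    ∀ i < s.length, r.getD i 0 < s.getD i 0) Y


/-!
Insert the whole word into the top row, then the letters it bumps, in order, into the second
row, and so on. Suppose the letters of a weakly increasing word can be assigned strictly
increasing columns `< n`, each letter smaller than the row's entry in its column. Inserting the
word into that row, each letter lands weakly left of its assigned column, so the row grows to
length at most `n`, and the bumped letters form a subword of the row. By column strictness a
bumped letter is smaller than the entry below it, so the bumped word satisfies the same
hypothesis for the next row, with `n` the old length of the row above. Hence no row grows past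
the old length of the row above it.
-/
lemma exists_insertRow_eq (R : List ℕ) (x : ℕ) :
    ∃ q ≤ R.length, (∀ y ∈ R.take q, y ≤ x) ∧ (∀ y ∈ R[q]?, x < y) ∧
      insertRow R x = (R.take q ++ x :: R.drop (q + 1), R[q]?) := by
  induction R with
  | nil => exact ⟨0, le_rfl, by simp, by simp, rfl⟩
  | cons y ys ih =>
    by_cases hxy : x < y
    · exact ⟨0, by simp, by simp, by simpa using hxy, by simp [insertRow, hxy]⟩
    · obtain ⟨q, hq, hle, hlt, heq⟩ := ih
      refine ⟨q + 1, by simpa using hq, ?_, by simpa using hlt, by simp [insertRow, hxy, heq]⟩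
      simp only [List.take_succ_cons, List.mem_cons, forall_eq_or_imp]
      exact ⟨not_lt.mp hxy, hle⟩

lemma length_le_length_insertRow_fst (R : List ℕ) (x : ℕ) :
    R.length ≤ (insertRow R x).1.length := by
  obtain ⟨q, hq, -, -, heq⟩ := exists_insertRow_eq R x
  simp only [heq, List.length_append, List.length_take, List.length_cons, List.length_drop]
  omega

def insertRowWord : List ℕ → List ℕ → List ℕ × List ℕ
  | R, [] => (R, [])
  | R, x :: v =>
    let p := insertRowWord (insertRow R x).1 v
    (p.1, (insertRow R x).2.toList ++ p.2)

lemma length_le_length_insertRowWord_fst (v R : List ℕ) :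
    R.length ≤ (insertRowWord R v).1.length := by
  induction v generalizing R with
  | nil => rfl
  | cons x v ih => exact (length_le_length_insertRow_fst R x).trans (ih _)

lemma rsInsertWord_cons_row (v R : List ℕ) (rest : List (List ℕ)) :
    rsInsertWord (R :: rest) v =
      (insertRowWord R v).1 :: rsInsertWord rest (insertRowWord R v).2 := by
  induction v generalizing R rest with
  | nil => rfl
  | cons x v ih =>
    change rsInsertWord (rsInsert (R :: rest) x) v = _
    cases h : (insertRow R x).2 <;>
      simp only [rsInsert, h, ih] <;> simp [insertRowWord, h, rsInsertWord]

/-- `FitsAbove S n d v`: the letters of `v` can be put in strictly increasing columns of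
`[d, n)`, each strictly smaller than the entry of the row `S` in its column (if any). -/
inductive FitsAbove (S : List ℕ) (n : ℕ) : ℕ → List ℕ → Prop
  | nil (d : ℕ) : FitsAbove S n d []
  | cons {d a x : ℕ} {v : List ℕ} : d ≤ a → a < n → (∀ y ∈ S[a]?, x < y) →
      FitsAbove S n (a + 1) v → FitsAbove S n d (x :: v)

namespace FitsAbove

variable {S : List ℕ} {n : ℕ}

lemma mono {d d' : ℕ} {v : List ℕ} (hd : d ≤ d') (h : FitsAbove S n d' v) :
    FitsAbove S n d v := by
  cases h with
  | nil => exact nil d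
  | cons hda han hx hv => exact cons (hd.trans hda) han hx hv

lemma of_drop_eq {S' : List ℕ} {d : ℕ} {v : List ℕ} (h : FitsAbove S n d v)
    (hS : S'.drop d = S.drop d) : FitsAbove S' n d v := by
  induction h with
  | nil d => exact nil d
  | @cons d a x v hda han hx _ ih =>
    have hget : S'[a]? = S[a]? := by
      simpa [List.getElem?_drop, Nat.add_sub_cancel' hda] using
        congrArg (·[a - d]?) hS
    refine cons hda han (hget ▸ hx) (ih ?_)
    have := congrArg (List.drop (a + 1 - d)) hS
    simpa only [List.drop_drop, Nat.add_sub_cancel' (hda.trans a.le_succ)] using this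

lemma of_length_le {d : ℕ} (v : List ℕ) (hd : S.length ≤ d) :
    FitsAbove S (d + v.length) d v := by
  induction v generalizing d with
  | nil => exact nil d
  | cons x v ih =>
    refine cons le_rfl (by simp) (by simp [List.getElem?_eq_none hd]) ?_
    simpa [Nat.add_right_comm, Nat.add_assoc] using ih (d := d + 1) (by omega)

end FitsAbove

lemma FitsAbove.of_sublist_drop {S T u : List ℕ} {d : ℕ}
    (hST : ∀ i < T.length, S.getD i 0 < T.getD i 0) (hu : u.Sublist (S.drop d)) :
    FitsAbove T S.length d u := by
  generalize hR : S.drop d = R at hu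
  induction hu generalizing d with
  | slnil => exact .nil d
  | cons r _ ih =>
    exact (ih (by rw [← List.tail_drop, hR]; rfl)).mono d.le_succ
  | cons_cons y _ ih =>
    have hy : S[d]? = some y := by rw [← Nat.add_zero d, ← List.getElem?_drop, hR]; rfl
    have hd : d < S.length := (List.getElem?_eq_some_iff.mp hy).1
    refine .cons le_rfl hd ?_ (ih (by rw [← List.tail_drop, hR]; rfl))
    intro t ht
    rw [Option.mem_def] at ht
    have hdT : d < T.length := (List.getElem?_eq_some_iff.mp ht).1
    simpa [List.getD_eq_getElem?_getD, hy, ht] using hST d hdT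

lemma insertRowWord_of_fitsAbove {v : List ℕ} (hv : v.Pairwise (· ≤ ·)) {S : List ℕ}
    {n c d : ℕ} (hfit : FitsAbove S n d v) (hn : S.length ≤ n)
    (hc : ∀ y ∈ S.take c, ∀ x ∈ v, y ≤ x) :
    (insertRowWord S v).1.length ≤ n ∧ (insertRowWord S v).2.Sublist (S.drop c) := by
  induction v generalizing S c d with
  | nil => exact ⟨hn, List.nil_sublist _⟩
  | cons x v ih =>
    obtain ⟨hxv, hv⟩ := List.pairwise_cons.mp hv
    obtain _ | @⟨_, a, _, _, -, han, hxa, hfit⟩ := hfit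
    obtain ⟨q, hq, hle, hlt, heq⟩ := exists_insertRow_eq S x
    set S' := S.take q ++ x :: S.drop (q + 1) with hS'
    have hqa : q ≤ a := by
      by_contra! haq
      obtain ⟨y, hy⟩ : ∃ y, S[a]? = some y := ⟨S[a], List.getElem?_eq_getElem (by omega)⟩
      have hy' : y ∈ S.take q := List.mem_of_getElem? (by rwa [List.getElem?_take_of_lt haq])
      exact absurd (hle y hy') (not_le.mpr (hxa y hy))
    have hdrop : S'.drop (q + 1) = S.drop (q + 1) := by
      rw [hS', ← List.singleton_append, ← List.append_assoc]
      exact List.drop_left' (by simp; omega)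
    have htake : S'.take (q + 1) = S.take q ++ [x] := by
      rw [hS', ← List.singleton_append, ← List.append_assoc]
      exact List.take_left' (by simp; omega)
    have hfit' : FitsAbove S' n (a + 1) v := by
      refine hfit.of_drop_eq ?_
      rw [show a + 1 = q + 1 + (a - q) by omega, ← List.drop_drop, hdrop, List.drop_drop]
    have hc' : ∀ y ∈ S'.take (q + 1), ∀ z ∈ v, y ≤ z := by
      simp only [htake, List.mem_append, List.mem_singleton]
      rintro y (hy | rfl) z hz
      exacts [(hle y hy).trans (hxv z hz), hxv z hz]
    obtain ⟨hlen, hsub⟩ := ih hv hfit' (by simp [hS']; omega) hc'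
    simp only [insertRowWord, heq]
    refine ⟨hlen, ?_⟩
    rw [hdrop] at hsub
    cases hSq : S[q]? with
    | none =>
      rw [List.drop_eq_nil_of_le (by simp at hSq; omega), List.sublist_nil] at hsub
      simp [hsub]
    | some y =>
      have hcq : c ≤ q := by
        by_contra! hqc
        have hy : y ∈ S.take c := List.mem_of_getElem? (by rwa [List.getElem?_take_of_lt hqc])
        exact absurd (hc y hy x (by simp)) (not_le.mpr (hlt y hSq))
      have hdropq : S.drop q = y :: S.drop (q + 1) := by
        simp [List.drop_eq_getElem?_toList_append (i := q), hSq]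
      exact (hsub.cons_cons y).trans (hdropq ▸ List.drop_sublist_drop_left S hcq)

def IsRowAbove (r s : List ℕ) : Prop :=
  s.length ≤ r.length ∧ ∀ i < s.length, r.getD i 0 < s.getD i 0

lemma shapeAt_rsInsertWord_of_fitsAbove {Y : List (List ℕ)}
    (hrows : ∀ r ∈ Y, r.IsChain (· ≤ ·)) (hcols : Y.IsChain IsRowAbove) {v : List ℕ}
    (hv : v.Pairwise (· ≤ ·)) {n d : ℕ} (hfit : FitsAbove (Y.headD []) n d v)
    (hn : (Y.headD []).length ≤ n) :
    shapeAt (rsInsertWord Y v) 0 ≤ n ∧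
      ∀ i, shapeAt (rsInsertWord Y v) (i + 1) ≤ shapeAt Y i := by
  induction Y generalizing v n d with
  | nil =>
    cases v with
    | nil => simp [shapeAt, rsInsertWord]
    | cons x v =>
      obtain ⟨hlen, hsub⟩ :=
        insertRowWord_of_fitsAbove (S := []) hv hfit hn (c := 0) (by simp)
      rw [show rsInsertWord [] (x :: v) = rsInsertWord [[]] (x :: v) from rfl,
        rsInsertWord_cons_row, List.sublist_nil.mp hsub]
      exact ⟨hlen, fun i => by simp [shapeAt, rsInsertWord]⟩
  | cons S rest ih =>
    obtain ⟨hlen, hsub⟩ := insertRowWord_of_fitsAbove hv hfit hn (c := 0) (by simp)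
    rw [List.drop_zero] at hsub
    have hS : S.Pairwise (· ≤ ·) := List.isChain_iff_pairwise.mp (hrows S List.mem_cons_self)
    have hbelow : IsRowAbove S (rest.headD []) := by
      cases rest with
      | nil => simp [IsRowAbove]
      | cons T rest => exact (List.isChain_cons_cons.mp hcols).1
    obtain ⟨ih0, ihsucc⟩ := ih (fun r hr => hrows r (List.mem_cons_of_mem S hr)) hcols.tail
      (hS.sublist hsub) (FitsAbove.of_sublist_drop hbelow.2 (by rwa [List.drop_zero]))
      hbelow.1
    rw [rsInsertWord_cons_row]
    refine ⟨hlen, fun i => ?_⟩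
    cases i with
    | zero => exact ih0
    | succ i => exact ihsucc i

lemma shapeAt_le_shapeAt_rsInsertWord (Y : List (List ℕ)) (w : List ℕ) (i : ℕ) :
    shapeAt Y i ≤ shapeAt (rsInsertWord Y w) i := by
  induction Y generalizing w i with
  | nil => simp [shapeAt]
  | cons S rest ih =>
    rw [rsInsertWord_cons_row]
    cases i with
    | zero => exact length_le_length_insertRowWord_fst w S
    | succ i => exact ih _ i

theorem schensted_insert_word_horizontal_strip_general (Y : List (List ℕ)) (w : List ℕ)
    (hY : IsSSYT Y)
    (hw : List.Chain' (· ≤ ·) w) :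
    (∀ i, shapeAt Y i ≤ shapeAt (rsInsertWord Y w) i) ∧
    (∀ i, shapeAt (rsInsertWord Y w) (i + 1) ≤ shapeAt Y i) :=
  ⟨shapeAt_le_shapeAt_rsInsertWord Y w,
    (shapeAt_rsInsertWord_of_fitsAbove hY.1 hY.2.2 (List.isChain_iff_pairwise.mp hw)
      (FitsAbove.of_length_le w le_rfl) (Nat.le_add_right _ _)).2⟩

/-- Inserting a weakly increasing word into a semistandard tableau adds a
horizontal strip: the new shape contains the old one, with at most one new
box in each column. -/
theorem schensted_insert_word_horizontal_strip (Y : List (List ℕ)) (w : List ℕ)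
    (hY : IsSSYT Y) (hYpos : ∀ r ∈ Y, ∀ a ∈ r, 0 < a)
    (hw : List.Chain' (· ≤ ·) w) (hwpos : ∀ a ∈ w, 0 < a) :
    (∀ i, shapeAt Y i ≤ shapeAt (rsInsertWord Y w) i) ∧
    (∀ i, shapeAt (rsInsertWord Y w) (i + 1) ≤ shapeAt Y i) :=
  schensted_insert_word_horizontal_strip_general Y w hY hw
end

section
/- Let u be the r × s rectangular semistandard tableau whose i-th row is filled entirely with the entry i (the highest element of B^{r,s}), and let v be any semistandard tableau of rectangular shape r' × s' with entries in {1, …, n+1}. Then the row word insertion (u ← row(v)) has shape equal to the concatenation of the partitions (s^r) and (s'^{r'}), i.e. the partition whose i-th part is s + s' for i ≤ min(r,r') and appropriate parts from the larger of the two rectangles otherwise. Consequently the energy H(v ⊗ u) = 0. -/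
/-!
Every letter of `row(v)` is `≥ 1`, so during the insertion into `u` it never bumps an entry of
the block of `i`'s in row `i`: a letter reaching row `i` is `≥ i + 1`, and a letter bumped out of
row `i` exceeds the letter that bumped it, hence is `≥ i + 2`. Thus `u ← row(v)` is `u` with
`∅ ← row(v)` glued to the right of its rows, and `∅ ← row(v) = v` because `v` is semistandard.
The shape of `u ← row(v)` is therefore the sum of the two rectangles, and no box lies outside it.
-/

theorem insertRow_append_of_forall_not_lt (x : ℕ) :
    ∀ (p l : List ℕ), (∀ b ∈ p, ¬ x < b) →
      insertRow (p ++ l) x = (p ++ (insertRow l x).1, (insertRow l x).2)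
  | [], _, _ => rfl
  | b :: p, l, h => by
    simp [insertRow, h b (by simp),
      insertRow_append_of_forall_not_lt x p l fun c hc => h c (by simp [hc])]

theorem lt_of_insertRow_snd_eq_some : ∀ {l : List ℕ} {x y : ℕ}, (insertRow l x).2 = some y → x < y
  | [], _, _ => by simp [insertRow]
  | b :: l, x, y => by
    by_cases hb : x < b
    · simp only [insertRow, if_pos hb, Option.some.injEq]
      rintro rfl
      exact hb
    · simpa only [insertRow, if_neg hb] using lt_of_insertRow_snd_eq_some

theorem rsInsertWord_append (Y : List (List ℕ)) (w w' : List ℕ) :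
    rsInsertWord Y (w ++ w') = rsInsertWord (rsInsertWord Y w) w' :=
  List.foldl_append

def RowAbove (y z : List ℕ) : Prop :=
  z.length ≤ y.length ∧ ∀ i < z.length, y.getD i 0 < z.getD i 0

section IsSSYT

variable {a b : List ℕ} {l : List (List ℕ)}

theorem IsSSYT.tail (h : IsSSYT (a :: l)) : IsSSYT l :=
  ⟨fun r hr => h.1 r (.tail _ hr), fun r hr => h.2.1 r (.tail _ hr),
    (List.isChain_cons.mp h.2.2).2⟩

theorem IsSSYT.pairwise_head (h : IsSSYT (a :: l)) : a.Pairwise (· ≤ ·) :=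
  List.isChain_iff_pairwise.mp (h.1 a List.mem_cons_self)

theorem IsSSYT.head_ne_nil (h : IsSSYT (a :: l)) : a ≠ [] :=
  h.2.1 a List.mem_cons_self

theorem IsSSYT.rowAbove (h : IsSSYT (a :: b :: l)) : RowAbove a b :=
  (List.isChain_cons_cons.mp h.2.2).1

end IsSSYT

/-- The prefix `p` holds the letters of the inserted row that are already in place. -/
theorem rsInsertWord_bump_row : ∀ (y p z : List ℕ) (Z : List (List ℕ)),
    (p ++ y).Pairwise (· ≤ ·) → RowAbove y z →
      rsInsertWord ((p ++ z) :: Z) y = (p ++ y) :: rsInsertWord Z z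
  | [], p, z, Z, _, hyz => by
    obtain rfl : z = [] := List.eq_nil_of_length_eq_zero (Nat.le_zero.mp hyz.1)
    rfl
  | a :: y, p, z, Z, hpy, hyz => by
    have hpa : ∀ b ∈ p, ¬ a < b := fun b hb =>
      not_lt.mpr ((List.pairwise_append.mp hpy).2.2 b hb a List.mem_cons_self)
    have hpy' : (p ++ [a] ++ y).Pairwise (· ≤ ·) := by simpa using hpy
    show rsInsertWord (rsInsert ((p ++ z) :: Z) a) y = _
    rw [rsInsert, insertRow_append_of_forall_not_lt a p z hpa]
    cases z with
    | nil =>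
      have := rsInsertWord_bump_row y (p ++ [a]) [] Z hpy' ⟨Nat.zero_le _, by simp⟩
      simpa [insertRow] using this
    | cons b z =>
      have hab : a < b := by simpa using hyz.2 0 (by simp)
      have hyz' : RowAbove y z :=
        ⟨by simpa using hyz.1, fun j hj => by simpa using hyz.2 (j + 1) (by simpa using hj)⟩
      have := rsInsertWord_bump_row y (p ++ [a]) z (rsInsert Z b) hpy' hyz'
      simp only [List.append_assoc, List.singleton_append] at this
      rw [show insertRow (b :: z) a = (a :: z, some b) by simp [insertRow, hab]]
      exact this

theorem rsInsertWord_eq_cons_of_isSSYT :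
    ∀ {y : List ℕ} {v : List (List ℕ)}, IsSSYT (y :: v) → rsInsertWord v y = y :: v
  | a :: y, [], hv => by
    have := rsInsertWord_bump_row y [a] [] [] hv.pairwise_head ⟨Nat.zero_le _, by simp⟩
    simpa [rsInsertWord, rsInsert, insertRow] using this
  | y, z :: v, hv => by
    simpa [rsInsertWord_eq_cons_of_isSSYT hv.tail] using
      rsInsertWord_bump_row y [] z v hv.pairwise_head hv.rowAbove
  | [], [], hv => absurd rfl hv.head_ne_nil

theorem rsInsertWord_nil_rowWord : ∀ {v : List (List ℕ)}, IsSSYT v → rsInsertWord [] (rowWord v) = v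
  | [], _ => rfl
  | y :: v, hv => by
    rw [show rowWord (y :: v) = rowWord v ++ y by simp [rowWord], rsInsertWord_append,
      rsInsertWord_nil_rowWord hv.tail, rsInsertWord_eq_cons_of_isSSYT hv]

/-- `graft s c r T` prefixes row `i < r` of `T` with `s` copies of `c + i`. -/
def graft (s : ℕ) : ℕ → ℕ → List (List ℕ) → List (List ℕ)
  | _, 0, T => T
  | c, r + 1, T => (List.replicate s c ++ T.headD []) :: graft s (c + 1) r T.tail

theorem rsInsert_graft (s : ℕ) : ∀ (r c : ℕ) (T : List (List ℕ)) (x : ℕ), c ≤ x →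
    rsInsert (graft s c r T) x = graft s c r (rsInsert T x)
  | 0, _, _, _, _ => rfl
  | r + 1, c, T, x, hcx => by
    have hskip : ∀ t, insertRow (List.replicate s c ++ t) x
        = (List.replicate s c ++ (insertRow t x).1, (insertRow t x).2) := fun t =>
      insertRow_append_of_forall_not_lt x _ t fun b hb => by
        rw [List.eq_of_mem_replicate hb]; omega
    cases T with
    | nil =>
      have := hskip []
      simp only [List.append_nil] at this
      simp [graft, rsInsert, this, insertRow]
    | cons t T =>
      cases hb : (insertRow t x).2 with
      | none => simp [graft, rsInsert, hskip, hb]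
      | some y =>
        have hy : c + 1 ≤ y := by have := lt_of_insertRow_snd_eq_some hb; omega
        simp [graft, rsInsert, hskip, hb, rsInsert_graft s r (c + 1) T y hy]

theorem rsInsertWord_graft (s r : ℕ) : ∀ (w : List ℕ) (c : ℕ) (T : List (List ℕ)),
    (∀ x ∈ w, c ≤ x) → rsInsertWord (graft s c r T) w = graft s c r (rsInsertWord T w)
  | [], _, _, _ => rfl
  | x :: w, c, T, h => by
    show rsInsertWord (rsInsert _ x) w = _
    rw [rsInsert_graft s r c T x (h x List.mem_cons_self)]
    exact rsInsertWord_graft s r w c _ fun y hy => h y (List.mem_cons_of_mem x hy)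

theorem map_replicate_range_eq_graft (s : ℕ) : ∀ r c : ℕ,
    (List.range r).map (fun i => List.replicate s (i + c)) = graft s c r []
  | 0, _ => rfl
  | r + 1, c => by
    rw [List.range_succ_eq_map, graft, List.tail_nil, ← map_replicate_range_eq_graft s r (c + 1)]
    simp [Nat.add_assoc, Nat.add_comm 1 c]

theorem highestTab_eq_graft (r s : ℕ) : highestTab r s = graft s 1 r [] :=
  map_replicate_range_eq_graft s r 1

theorem shapeAt_graft (s : ℕ) : ∀ (r c : ℕ) (T : List (List ℕ)) (i : ℕ),
    shapeAt (graft s c r T) i = (if i < r then s else 0) + shapeAt T i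
  | 0, _, _, _ => by simp [graft]
  | r + 1, c, T, 0 => by cases T <;> simp [graft, shapeAt]
  | r + 1, c, T, i + 1 => by
    have h := shapeAt_graft s r (c + 1) T.tail i
    cases T <;> simp_all [graft, shapeAt]

theorem shapeAt_of_map_length_eq_replicate {v : List (List ℕ)} {r s : ℕ}
    (h : v.map List.length = List.replicate r s) (i : ℕ) :
    shapeAt v i = if i < r then s else 0 := by
  have : shapeAt v i = (List.replicate r s).getD i 0 := by
    rw [← h, shapeAt, ← List.length_nil, List.getD_map]
  split_ifs with hi
  · rw [this, List.getD_replicate _ hi]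
  · rw [this, List.getD_eq_default _ _ (by simpa using hi)]

/-- Inserting the row word of a rectangular tableau `v` into the highest
tableau `u = u_s^{(r)}` gives a tableau whose shape is the concatenation of
the partitions `(s^r)` and `(s'^{r'})`; consequently `H(v ⊗ u) = 0`. -/
theorem insert_into_highest_shape_concat (r s r' s' n : ℕ) (v : List (List ℕ))
    (hv : IsSSYT v)
    (hshape : v.map List.length = List.replicate r' s')
    (hent : ∀ row ∈ v, ∀ a ∈ row, 1 ≤ a ∧ a ≤ n + 1) :
    (∀ i, shapeAt (rsInsertWord (highestTab r s) (rowWord v)) i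
        = (if i < r then s else 0) + (if i < r' then s' else 0)) ∧
    energyH v (highestTab r s) = 0 := by
  have hpos : ∀ x ∈ rowWord v, 1 ≤ x := by
    intro x hx
    obtain ⟨row, hrow, hx⟩ := List.mem_flatten.mp hx
    exact (hent row (List.mem_reverse.mp hrow) x hx).1
  have hinsert : rsInsertWord (highestTab r s) (rowWord v) = graft s 1 r v := by
    rw [highestTab_eq_graft, rsInsertWord_graft s r _ 1 [] hpos, rsInsertWord_nil_rowWord hv]
  have hu : ∀ i, shapeAt (highestTab r s) i = if i < r then s else 0 := fun i => by
    rw [highestTab_eq_graft, shapeAt_graft, shapeAt, List.getD_nil, List.length_nil, Nat.add_zero]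
  have hshape_concat : ∀ i, shapeAt (rsInsertWord (highestTab r s) (rowWord v)) i
      = (if i < r then s else 0) + (if i < r' then s' else 0) := fun i => by
    rw [hinsert, shapeAt_graft, shapeAt_of_map_length_eq_replicate hshape]
  refine ⟨hshape_concat, Finset.sum_eq_zero fun i _ => ?_⟩
  rw [hshape_concat, hu, shapeAt_of_map_length_eq_replicate hshape, Nat.sub_eq_zero_iff_le,
    Nat.add_comm]
end

section
/- Let v and v' be rectangular semistandard tableaux of shapes (a+1) × s and (a+1) × s' whose first a rows are the highest tableaux u_s^{(a)} and u_{s'}^{(a)} respectively, and whose bottom rows b = b_1⋯b_s and b' = b'_1⋯b'_{s'} have entries in {a+1, a+2}. Then H(v ⊗ v') = H(b ⊗ b'), where on the right b and b' are regarded as one-row tableaux (elements of A_1-type crystals after relabeling a+1 ↦ 1, a+2 ↦ 2). -/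
/-!
Row insertion of `row(v)` into `v'` proceeds row by row. The constant first row `1^{s'}` of
`v'` first absorbs `b`; then each block of equal letters of the highest part of `v` replaces the
block before it and pushes it one row down. After the whole word is inserted, the top `a` rows
are the rectangle rows `i^{s+s'}`, which lie inside the concatenated shape, and the bottom row of
`v'` has received `b` exactly as in `b' ← b`. Hence `H(v ⊗ v') = H(b ⊗ b')`, and insertion
commutes with the order-preserving relabelling `x ↦ x + a`.
-/

open List

section Insertion

lemma insertRow_of_forall_le {r : List ℕ} {x : ℕ} (h : ∀ z ∈ r, z ≤ x) :
    insertRow r x = (r ++ [x], none) := by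
  induction r with
  | nil => rfl
  | cons y ys ih =>
    simp [insertRow, not_lt.2 (h y mem_cons_self), ih fun z hz => h z (mem_cons_of_mem _ hz)]

lemma insertRow_append_cons {u v : List ℕ} {x y : ℕ} (hu : ∀ z ∈ u, z ≤ x) (hxy : x < y) :
    insertRow (u ++ y :: v) x = (u ++ x :: v, some y) := by
  induction u with
  | nil => simp [insertRow, hxy]
  | cons z u ih =>
    simp [insertRow, not_lt.2 (hu z mem_cons_self), ih fun w hw => hu w (mem_cons_of_mem _ hw)]

lemma rsInsertWord_append_s6 (T : List (List ℕ)) (w₁ w₂ : List ℕ) :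
    rsInsertWord T (w₁ ++ w₂) = rsInsertWord (rsInsertWord T w₁) w₂ :=
  foldl_append

lemma rsInsertWord_cons_of_pairwise {r w : List ℕ} (rest : List (List ℕ))
    (h : (r ++ w).Pairwise (· ≤ ·)) :
    rsInsertWord (r :: rest) w = (r ++ w) :: rest := by
  induction w generalizing r with
  | nil => simp [rsInsertWord]
  | cons x w ih =>
    have hx : ∀ z ∈ r, z ≤ x := fun z hz => (pairwise_append.1 h).2.2 z hz x mem_cons_self
    change rsInsertWord (rsInsert (r :: rest) x) w = _
    simp only [rsInsert, insertRow_of_forall_le hx]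
    simpa using ih (r := r ++ [x]) (by simpa using h)

lemma rsInsertWord_replicate {u v : List ℕ} {x : ℕ} (k : ℕ) (rest : List (List ℕ))
    (hu : ∀ z ∈ u, z ≤ x) (hv : ∀ y ∈ v, x < y) :
    rsInsertWord ((u ++ v) :: rest) (replicate k x)
      = (u ++ replicate k x ++ v.drop k) :: rsInsertWord rest (v.take k) := by
  induction k generalizing u v rest with
  | zero => simp [rsInsertWord]
  | succ k ih =>
    have hux : ∀ z ∈ u ++ [x], z ≤ x := by
      simp only [mem_append, mem_singleton]
      rintro z (hz | rfl)
      exacts [hu z hz, le_rfl]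
    rw [replicate_succ]
    change rsInsertWord (rsInsert ((u ++ v) :: rest) x) (replicate k x) = _
    cases v with
    | nil =>
      simp only [append_nil, rsInsert, insertRow_of_forall_le hu]
      simpa [replicate_succ'] using ih (u := u ++ [x]) (v := []) rest hux (by simp)
    | cons y v =>
      simp only [rsInsert, insertRow_append_cons hu (hv y mem_cons_self)]
      have := ih (u := u ++ [x]) (v := v) (rsInsert rest y) hux
        fun z hz => hv z (mem_cons_of_mem _ hz)
      simpa [replicate_succ', rsInsertWord] using this

end Insertion

section Rectangles

def rectTab (s c : ℕ) : ℕ → List (List ℕ)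
  | 0 => []
  | a + 1 => replicate s c :: rectTab s (c + 1) a

lemma highestTab_eq_rectTab (a s : ℕ) : highestTab a s = rectTab s 1 a := by
  suffices h : ∀ c, (range a).map (fun i => replicate s (c + i)) = rectTab s c a by
    simpa [highestTab, add_comm] using h 1
  induction a with
  | zero => simp [rectTab]
  | succ a ih =>
    intro c
    simp [range_succ_eq_map, rectTab, ← ih (c + 1), add_assoc, add_comm 1]

lemma rowWord_cons (r : List ℕ) (T : List (List ℕ)) : rowWord (r :: T) = rowWord T ++ r := by
  simp [rowWord]

-- Each block of equal letters of the row word replaces the previous block (initially `u`) in the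
-- first row and pushes it down to the next row.
lemma rsInsertWord_rowWord_rectTab {s s' d : ℕ} (a : ℕ) {c : ℕ} {u : List ℕ}
    (rest : List (List ℕ)) (hdc : d ≤ c) (hu : u.length = s) (hlt : ∀ x ∈ u, c + a < x) :
    rsInsertWord ((replicate s' d ++ u) :: rest) (rowWord (rectTab s c (a + 1)))
      = (replicate s' d ++ replicate s c) ::
          rsInsertWord rest (u ++ rowWord (rectTab s (c + 1) a)) := by
  have hd : ∀ z ∈ replicate s' d, z ≤ c := fun z hz => (eq_of_mem_replicate hz).trans_le hdc
  induction a generalizing c with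
  | zero =>
    subst hu
    have := rsInsertWord_replicate u.length rest hd fun x hx => by simpa using hlt x hx
    simpa [rectTab, rowWord] using this
  | succ a ih =>
    rw [rectTab, rowWord_cons, rsInsertWord_append_s6,
      ih (c := c + 1) (by omega) (fun x hx => by have := hlt x hx; omega)
        (fun z hz => (hd z hz).trans (Nat.le_succ c)),
      rsInsertWord_replicate s _ hd fun y hy => by simp [eq_of_mem_replicate hy],
      ← rsInsertWord_append_s6]
    simp [rectTab, rowWord_cons]

lemma rsInsertWord_rectTab_append {s s' c : ℕ} (a : ℕ) {b : List ℕ} (rest : List (List ℕ))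
    (hlen : b.length = s) (hsorted : b.Pairwise (· ≤ ·)) (hge : ∀ x ∈ b, c + a ≤ x) :
    rsInsertWord (rectTab s' c a ++ rest) (rowWord (rectTab s c a ++ [b]))
      = rectTab (s' + s) c a ++ rsInsertWord rest b := by
  rw [show rowWord (rectTab s c a ++ [b]) = b ++ rowWord (rectTab s c a) by simp [rowWord]]
  induction a generalizing c with
  | zero => simp [rectTab, rowWord]
  | succ a ih =>
    have hrow : (replicate s' c ++ b).Pairwise (· ≤ ·) := pairwise_append.2
      ⟨pairwise_replicate.2 (Or.inr le_rfl), hsorted,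
        fun z hz x hx => by have := hge x hx; rw [eq_of_mem_replicate hz]; omega⟩
    rw [rectTab, cons_append, rsInsertWord_append_s6, rsInsertWord_cons_of_pairwise _ hrow,
      rsInsertWord_rowWord_rectTab a _ le_rfl hlen fun x hx => by have := hge x hx; omega,
      ih fun x hx => by have := hge x hx; omega, rectTab, replicate_add, cons_append]

end Rectangles

section Energy

def shapeExcess (Z X Y : List (List ℕ)) : ℕ :=
  ∑ i ∈ Finset.range Z.length, (shapeAt Z i - (shapeAt X i + shapeAt Y i))

lemma energyH_eq_shapeExcess (b b' : List (List ℕ)) :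
    energyH b b' = shapeExcess (rsInsertWord b' (rowWord b)) b b' := rfl

lemma shapeExcess_cons (r x y : List ℕ) (Z X Y : List (List ℕ)) :
    shapeExcess (r :: Z) (x :: X) (y :: Y)
      = shapeExcess Z X Y + (r.length - (x.length + y.length)) := by
  simp [shapeExcess, shapeAt, Finset.sum_range_succ']

lemma shapeExcess_rectTab_append (s s' c a : ℕ) (Z X Y : List (List ℕ)) :
    shapeExcess (rectTab (s' + s) c a ++ Z) (rectTab s c a ++ X) (rectTab s' c a ++ Y)
      = shapeExcess Z X Y := by
  induction a generalizing c with
  | zero => rfl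
  | succ a ih => simp [rectTab, shapeExcess_cons, ih, add_comm s s']

lemma energyH_rectTab_append {s s' c : ℕ} (a : ℕ) {b : List ℕ} (rest : List (List ℕ))
    (hlen : b.length = s) (hsorted : b.Pairwise (· ≤ ·)) (hge : ∀ x ∈ b, c + a ≤ x) :
    energyH (rectTab s c a ++ [b]) (rectTab s' c a ++ rest) = energyH [b] rest := by
  rw [energyH_eq_shapeExcess, rsInsertWord_rectTab_append a rest hlen hsorted hge,
    shapeExcess_rectTab_append, energyH_eq_shapeExcess]
  simp [rowWord]

end Energy

section Relabel

variable {f : ℕ → ℕ}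

lemma insertRow_map (hf : StrictMono f) (r : List ℕ) (x : ℕ) :
    insertRow (r.map f) (f x) = ((insertRow r x).1.map f, (insertRow r x).2.map f) := by
  induction r with
  | nil => rfl
  | cons y ys ih => by_cases h : x < y <;> simp [insertRow, hf.lt_iff_lt, h, ih]

lemma rsInsert_map (hf : StrictMono f) (T : List (List ℕ)) (x : ℕ) :
    rsInsert (T.map (map f)) (f x) = (rsInsert T x).map (map f) := by
  induction T generalizing x with
  | nil => rfl
  | cons r rs ih =>
    simp only [map_cons, rsInsert, insertRow_map hf]
    cases (insertRow r x).2 <;> simp [ih]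

lemma rsInsertWord_map (hf : StrictMono f) (T : List (List ℕ)) (w : List ℕ) :
    rsInsertWord (T.map (map f)) (w.map f) = (rsInsertWord T w).map (map f) := by
  induction w generalizing T with
  | nil => rfl
  | cons x w ih =>
    change rsInsertWord (rsInsert _ (f x)) (w.map f) = _
    rw [rsInsert_map hf, ih]
    rfl

lemma energyH_map (hf : StrictMono f) (b b' : List (List ℕ)) :
    energyH (b.map (map f)) (b'.map (map f)) = energyH b b' := by
  have hrow : rowWord (b.map (map f)) = (rowWord b).map f := by
    simp [rowWord, map_flatten, map_reverse]
  have hshape (T : List (List ℕ)) (i : ℕ) : shapeAt (T.map (map f)) i = shapeAt T i := by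
    simpa [shapeAt] using congrArg length (getD_map T [] (n := i) (map f))
  simp only [energyH_eq_shapeExcess, shapeExcess, hrow, rsInsertWord_map hf, hshape, length_map]

end Relabel

theorem energy_reduces_to_A1_general (a s s' : ℕ) (brow b'row : List ℕ)
    (hlen : brow.length = s)
    (hchain : List.Chain' (· ≤ ·) brow)
    (hent : ∀ x ∈ brow, x = a + 1 ∨ x = a + 2)
    (hent' : ∀ x ∈ b'row, x = a + 1 ∨ x = a + 2) :
    energyH (highestTab a s ++ [brow]) (highestTab a s' ++ [b'row])
      = energyH [brow.map (fun x => x - a)] [b'row.map (fun x => x - a)] := by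
  have hlift : ∀ l : List ℕ, (∀ x ∈ l, x = a + 1 ∨ x = a + 2) →
      (l.map (fun x => x - a)).map (· + a) = l := fun l hl => by
    rw [map_map]
    refine (map_congr_left fun x hx => ?_).trans (map_id l)
    have := hl x hx
    simp only [Function.comp_apply, id_eq]
    omega
  calc energyH (highestTab a s ++ [brow]) (highestTab a s' ++ [b'row])
      = energyH [brow] [b'row] := by
        rw [highestTab_eq_rectTab, highestTab_eq_rectTab]
        exact energyH_rectTab_append a _ hlen (isChain_iff_pairwise.1 hchain)
          fun x hx => by have := hent x hx; omega
    _ = _ := by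
        conv_rhs => rw [← energyH_map (f := (· + a)) add_left_strictMono]
        simp only [map_cons, map_nil, hlift brow hent, hlift b'row hent']

/-- For rectangular tableaux `v, v'` of shapes `(a+1) × s` and `(a+1) × s'`
whose first `a` rows are highest and whose bottom rows have entries in
`{a+1, a+2}`, the energy `H(v ⊗ v')` equals the `A_1`-type energy of the
bottom rows (after relabelling `a+1 ↦ 1`, `a+2 ↦ 2`). -/
theorem energy_reduces_to_A1 (a s s' : ℕ) (brow b'row : List ℕ)
    (hlen : brow.length = s) (hlen' : b'row.length = s')
    (hchain : List.Chain' (· ≤ ·) brow) (hchain' : List.Chain' (· ≤ ·) b'row)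
    (hent : ∀ x ∈ brow, x = a + 1 ∨ x = a + 2)
    (hent' : ∀ x ∈ b'row, x = a + 1 ∨ x = a + 2) :
    energyH (highestTab a s ++ [brow]) (highestTab a s' ++ [b'row])
      = energyH [brow.map (fun x => x - a)] [b'row.map (fun x => x - a)] :=
  energy_reduces_to_A1_general a s s' brow b'row hlen hchain hent hent'
end

section
/- Let ε_{l,j} := (E_{l,j} − E_{l,j−1}) − (E_{l−1,j} − E_{l−1,j−1}) be the local energy distribution of a path (A_1 case, all b_j single boxes in B^{1,1}). Then every ε_{l,j} is a nonnegative integer, and for each fixed j, Σ_l ε_{l,j} ≤ 1. -/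
/-- Local energy `H(u ⊗ x)` for the `A_1` combinatorial `R` on
`B^{1,l} ⊗ B^{1,1}`, with the carrier identified with its number `m` of 2's. -/
def hC (m x : ℕ) : ℕ := if x = 1 ∧ 1 ≤ m then 1 else 0

/-- New carrier for the `A_1` combinatorial `R` on `B^{1,l} ⊗ B^{1,1}`. -/
def nC (l m x : ℕ) : ℕ := if x = 1 then m - 1 else if m < l then m + 1 else m

/-- Partial energies `E_{l,j}`: total energy of the first `j` boxes with
carrier in `B^{1,l}` (initially the all-`1` carrier, `m = 0`). -/
def Efun (b : List ℕ) (l j : ℕ) : ℕ :=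
  ((b.take j).foldl (fun p x => (nC l p.1 x, p.2 + hC p.1 x)) ((0 : ℕ), (0 : ℕ))).2

/-- Local energy distribution
`ε_{l,j} = (E_{l,j} − E_{l,j−1}) − (E_{l−1,j} − E_{l−1,j−1})`,
with conventions `E_{0,j} = 0` and `E_{l,0} = 0`. -/
def epsLD (b : List ℕ) (l j : ℕ) : ℤ :=
  ((Efun b l j : ℤ) - (Efun b l (j - 1) : ℤ))
    - ((Efun b (l - 1) j : ℤ) - (Efun b (l - 1) (j - 1) : ℤ))

/-!
Both the new carrier `nC l m x` and the local energy `hC m x` are monotone in `l` and `m`, so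
carriers grow with `l` box by box, and therefore so does the energy
`E_{l,j} − E_{l,j−1} = hC (carrier) b_j` of the `j`-th box: `ε_{l,j} ≥ 0`. Along a column the sum
of `ε_{l,j}` telescopes to `E_{N,j} − E_{N,j−1} − (E_{0,j} − E_{0,j−1})`, a single local energy,
which is at most `1`.
-/

lemma nC_mono {l l' m m' : ℕ} (x : ℕ) (hl : l ≤ l') (hm : m ≤ m') : nC l m x ≤ nC l' m' x := by
  unfold nC; split_ifs <;> omega

lemma hC_mono {m m' : ℕ} (x : ℕ) (hm : m ≤ m') : hC m x ≤ hC m' x := by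
  unfold hC; split_ifs <;> omega

lemma hC_le_one (m x : ℕ) : hC m x ≤ 1 := by
  unfold hC; split_ifs <;> omega

def energyStep (l : ℕ) (p : ℕ × ℕ) (x : ℕ) : ℕ × ℕ := (nC l p.1 x, p.2 + hC p.1 x)

lemma foldl_energyStep_fst_mono {l l' : ℕ} (hl : l ≤ l') (s : List ℕ) {p q : ℕ × ℕ}
    (hpq : p.1 ≤ q.1) : (s.foldl (energyStep l) p).1 ≤ (s.foldl (energyStep l') q).1 := by
  induction s generalizing p q with
  | nil => exact hpq
  | cons x s ih => exact ih (nC_mono x hl hpq)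

lemma foldl_energyStep_zero (s : List ℕ) (e : ℕ) : s.foldl (energyStep 0) (0, e) = (0, e) := by
  induction s with
  | nil => rfl
  | cons x s ih =>
    have hstep : energyStep 0 (0, e) x = (0, e) := by
      simp only [energyStep, nC, hC]; split_ifs <;> simp_all
    rw [List.foldl_cons, hstep, ih]

def carrier (b : List ℕ) (l k : ℕ) : ℕ := ((b.take k).foldl (energyStep l) (0, 0)).1

lemma carrier_mono (b : List ℕ) (k : ℕ) : Monotone fun l => carrier b l k :=
  fun _ _ hl => foldl_energyStep_fst_mono hl _ le_rfl

lemma Efun_eq_foldl_energyStep (b : List ℕ) (l j : ℕ) :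
    Efun b l j = ((b.take j).foldl (energyStep l) (0, 0)).2 := rfl

lemma Efun_zero_left (b : List ℕ) (j : ℕ) : Efun b 0 j = 0 := by
  rw [Efun_eq_foldl_energyStep, foldl_energyStep_zero]

lemma Efun_succ {b : List ℕ} (l : ℕ) {k : ℕ} (hk : k < b.length) :
    Efun b l (k + 1) = Efun b l k + hC (carrier b l k) b[k] := by
  rw [Efun_eq_foldl_energyStep, Efun_eq_foldl_energyStep, carrier, List.take_add_one,
    List.getElem?_eq_getElem hk, Option.toList_some, List.foldl_append]
  rfl

lemma sum_Icc_one_sub_pred {G : Type*} [AddCommGroup G] (f : ℕ → G) (N : ℕ) :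
    ∑ l ∈ Finset.Icc 1 N, (f l - f (l - 1)) = f N - f 0 := by
  induction N with
  | zero => simp
  | succ N ih =>
    rw [Finset.sum_Icc_succ_top (by omega), ih, Nat.add_sub_cancel]
    abel

theorem local_energy_distribution_nonneg_column_sum_general (b : List ℕ) :
    (∀ l j, 1 ≤ l → 1 ≤ j → j ≤ b.length → 0 ≤ epsLD b l j) ∧
    (∀ j N, 1 ≤ j → j ≤ b.length →
      (∑ l ∈ Finset.Icc 1 N, epsLD b l j) ≤ 1) := by
  constructor
  · intro l j _ hj hjb
    obtain ⟨k, rfl⟩ : ∃ k, j = k + 1 := ⟨j - 1, by omega⟩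
    have hk : k < b.length := by omega
    have hle : hC (carrier b (l - 1) k) b[k] ≤ hC (carrier b l k) b[k] :=
      hC_mono _ (carrier_mono b k (Nat.sub_le l 1))
    simp only [epsLD, Nat.add_sub_cancel, Efun_succ _ hk]
    push_cast
    omega
  · intro j N hj hjb
    obtain ⟨k, rfl⟩ : ∃ k, j = k + 1 := ⟨j - 1, by omega⟩
    have hk : k < b.length := by omega
    -- `epsLD b l j` is definitionally `f l - f (l - 1)` with `f l = E_{l,j} - E_{l,j-1}`.
    rw [show ∑ l ∈ Finset.Icc 1 N, epsLD b l (k + 1) = _ from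
      sum_Icc_one_sub_pred (fun l => (Efun b l (k + 1) : ℤ) - Efun b l (k + 1 - 1)) N]
    simp only [Efun_zero_left, Nat.add_sub_cancel, Efun_succ _ hk]
    have hone := hC_le_one (carrier b N k) b[k]
    push_cast
    omega

/-- Every entry of the local energy distribution of an `A_1` path of single
boxes is nonnegative, and each column sums to at most `1`. -/
theorem local_energy_distribution_nonneg_column_sum (b : List ℕ)
    (hb : ∀ x ∈ b, x = 1 ∨ x = 2) :
    (∀ l j, 1 ≤ l → 1 ≤ j → j ≤ b.length → 0 ≤ epsLD b l j) ∧
    (∀ j N, 1 ≤ j → j ≤ b.length →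
      (∑ l ∈ Finset.Icc 1 N, epsLD b l j) ≤ 1) :=
  local_energy_distribution_nonneg_column_sum_general b
end
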